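/- Let a > b > 0. For real parameters λ, μ with b < λ < a and μ < b, define the point P(λ, μ) = (Real.sqrt ((a - λ) * (a - μ) / (a - b)), Real.sqrt ((λ - b) * (b - μ) / (a - b))) in ℝ². Then for any λ₁, λ₂ ∈ (b, a) and μ₁, μ₂ < b, the Euclidean distance from P(λ₁, μ₁) to P(λ₂, μ₂) equals the Euclidean distance from P(λ₁, μ₂) to P(λ₂, μ₁). (Planar Ivory Lemma: the diagonals of a curvilinear quadrilateral made by arcs of confocal ellipses and hyperbolas are equal.) -/

import Mathlib

/-- The point of the plane with elliptic coordinates `(λ, μ)` associated with the confocal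
family `x²/(a-t) + y²/(b-t) = 1`. -/
noncomputable def ellipticPoint (a b lam mu : ℝ) : EuclideanSpace ℝ (Fin 2) :=
  (WithLp.equiv 2 (Fin 2 → ℝ)).symm
    ![Real.sqrt ((a - lam) * (a - mu) / (a - b)),
      Real.sqrt ((lam - b) * (b - mu) / (a - b))]

/-!
Expand `‖P₁₁ - P₂₂‖² = ‖P₁₁‖² + ‖P₂₂‖² - 2⟪P₁₁, P₂₂⟫`, where `Pᵢⱼ = P(λᵢ, μⱼ)`; both parts are
unchanged when `μ₁` and `μ₂` are exchanged. Indeed `‖P(λ, μ)‖² = a + b - λ - μ` separates the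
variables, and each coordinate of `P(λ, μ)` is the square root of (a factor in `λ`) times (a factor
in `μ`), so the products of coordinates in `⟪P₁₁, P₂₂⟫` only see the four factors, not how they
are paired.
-/

theorem dist_eq_dist_of_inner_eq {E : Type*} [NormedAddCommGroup E] [InnerProductSpace ℝ E]
    {p₁₁ p₁₂ p₂₁ p₂₂ : E} (hnorm : ‖p₁₁‖ ^ 2 + ‖p₂₂‖ ^ 2 = ‖p₁₂‖ ^ 2 + ‖p₂₁‖ ^ 2)
    (hinner : inner ℝ p₁₁ p₂₂ = inner ℝ p₁₂ p₂₁) :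
    dist p₁₁ p₂₂ = dist p₁₂ p₂₁ := by
  rw [dist_eq_norm, dist_eq_norm, ← sq_eq_sq₀ (norm_nonneg _) (norm_nonneg _),
    norm_sub_sq_real, norm_sub_sq_real, hinner]
  linarith

theorem Real.sqrt_mul_sqrt_div_swap {p₁ p₂ q₁ q₂ : ℝ} (c : ℝ) (h₁ : 0 ≤ p₁ * q₁ / c)
    (h₂ : 0 ≤ p₁ * q₂ / c) :
    √(p₁ * q₁ / c) * √(p₂ * q₂ / c) = √(p₁ * q₂ / c) * √(p₂ * q₁ / c) := by
  rw [← Real.sqrt_mul h₁, ← Real.sqrt_mul h₂]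
  ring_nf

section ellipticPoint

variable {a b lam mu : ℝ}

theorem ellipticPoint_apply_zero :
    ellipticPoint a b lam mu 0 = √((a - lam) * (a - mu) / (a - b)) := rfl

theorem ellipticPoint_apply_one :
    ellipticPoint a b lam mu 1 = √((lam - b) * (b - mu) / (a - b)) := rfl

theorem ellipticPoint_radicands_nonneg (hlam : lam ∈ Set.Icc b a) (hmu : mu ≤ b) :
    0 ≤ (a - lam) * (a - mu) / (a - b) ∧ 0 ≤ (lam - b) * (b - mu) / (a - b) := by
  obtain ⟨hb, ha⟩ := hlam
  have hab : 0 ≤ a - b := by linarith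
  exact ⟨div_nonneg (mul_nonneg (by linarith) (by linarith)) hab,
    div_nonneg (mul_nonneg (by linarith) (by linarith)) hab⟩

theorem norm_ellipticPoint_sq (hab : b < a) (hlam : lam ∈ Set.Icc b a) (hmu : mu ≤ b) :
    ‖ellipticPoint a b lam mu‖ ^ 2 = a + b - lam - mu := by
  obtain ⟨hx, hy⟩ := ellipticPoint_radicands_nonneg hlam hmu
  rw [EuclideanSpace.real_norm_sq_eq, Fin.sum_univ_two, ellipticPoint_apply_zero,
    ellipticPoint_apply_one, Real.sq_sqrt hx, Real.sq_sqrt hy]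
  field_simp [(sub_pos.2 hab).ne']
  ring

theorem inner_ellipticPoint_swap {lam₁ lam₂ mu₁ mu₂ : ℝ} (hlam₁ : lam₁ ∈ Set.Icc b a)
    (hmu₁ : mu₁ ≤ b) (hmu₂ : mu₂ ≤ b) :
    inner ℝ (ellipticPoint a b lam₁ mu₁) (ellipticPoint a b lam₂ mu₂) =
      inner ℝ (ellipticPoint a b lam₁ mu₂) (ellipticPoint a b lam₂ mu₁) := by
  obtain ⟨hx₁, hy₁⟩ := ellipticPoint_radicands_nonneg hlam₁ hmu₁
  obtain ⟨hx₂, hy₂⟩ := ellipticPoint_radicands_nonneg hlam₁ hmu₂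
  simp only [PiLp.inner_apply, Fin.sum_univ_two, ellipticPoint_apply_zero, ellipticPoint_apply_one,
    Real.inner_apply]
  rw [Real.sqrt_mul_sqrt_div_swap _ hx₁ hx₂, Real.sqrt_mul_sqrt_div_swap _ hy₁ hy₂]

end ellipticPoint

theorem ivory_lemma_plane (a b : ℝ) (hab : b < a)
    (lam₁ lam₂ mu₁ mu₂ : ℝ)
    (hlam₁ : b < lam₁ ∧ lam₁ < a) (hlam₂ : b < lam₂ ∧ lam₂ < a)
    (hmu₁ : mu₁ < b) (hmu₂ : mu₂ < b) :
    dist (ellipticPoint a b lam₁ mu₁) (ellipticPoint a b lam₂ mu₂) =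
      dist (ellipticPoint a b lam₁ mu₂) (ellipticPoint a b lam₂ mu₁) := by
  have hlam₁' : lam₁ ∈ Set.Icc b a := ⟨hlam₁.1.le, hlam₁.2.le⟩
  have hlam₂' : lam₂ ∈ Set.Icc b a := ⟨hlam₂.1.le, hlam₂.2.le⟩
  refine dist_eq_dist_of_inner_eq ?_ (inner_ellipticPoint_swap hlam₁' hmu₁.le hmu₂.le)
  rw [norm_ellipticPoint_sq hab hlam₁' hmu₁.le, norm_ellipticPoint_sq hab hlam₂' hmu₂.le,
    norm_ellipticPoint_sq hab hlam₁' hmu₂.le, norm_ellipticPoint_sq hab hlam₂' hmu₁.le]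
  ring
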